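/- arXiv:1701.08045 — 3 statements merged into one kernel-verified Lean document; each statement's English description precedes it below -/
import Mathlib

section
/- Let ω₁, ω₂ > 0, H ∈ ℝ^{(n_X n_Y)×(n_X n_Y)}, V₁ = {X ∈ ℝ^{n_X×m_X} : ‖X‖_F = ω₁} and V₂ = {Y ∈ ℝ^{n_Y×m_Y} : ‖Y‖_F = ω₂}. Then the double integral ∬_{V₁×V₂} (X ⊗ Y)ᵀ H (X ⊗ Y) dX dY equals (ω₁² ω₂² |V₁| |V₂| / (n_X m_X n_Y m_Y)) · tr(H) · I_{m_X m_Y}. -/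
/-!
Writing the `(a, b)` entry of `(X ⊗ Y)ᵀ H (X ⊗ Y)` as `∑ H p q X_{p₁a₁} X_{q₁b₁} Y_{p₂a₂} Y_{q₂b₂}`,
the double integral factors into second moments `∫ x_i x_j` over the two Frobenius spheres. On a
sphere of radius `r` in `ℝⁿ`, reflecting one coordinate kills the mixed moments, permuting
coordinates shows that the diagonal ones agree, and their sum is `∫ ‖x‖² = r² |S|`; so
`∫ x_i x_j = δ_ij r² |S| / n`, and only the trace of `H` survives.

For this the `(n-1)`-dimensional Hausdorff measure of the sphere must be finite. The sphere is
covered by the `2n` caps `{c ≤ ⟪±bᵢ, x⟫}` of an orthonormal basis, and on such a cap the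
orthogonal projection onto `bᵢᗮ` is antilipschitz, so each cap has finite measure.
-/

open MeasureTheory Matrix Kronecker

noncomputable def matOf {n m : ℕ} (x : EuclideanSpace ℝ (Fin n × Fin m)) :
    Matrix (Fin n) (Fin m) ℝ := Matrix.of fun i j => x (i, j)

open Metric Module
open scoped ENNReal NNReal RealInnerProductSpace

theorem hausdorffMeasure_le_mul_image_of_antilipschitzOn {X Y : Type*} [MetricSpace X]
    [MeasurableSpace X] [BorelSpace X] [MetricSpace Y] [MeasurableSpace Y] [BorelSpace Y]
    {f : X → Y} {s : Set X} {K : ℝ≥0}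
    (hf : ∀ x ∈ s, ∀ y ∈ s, dist x y ≤ K * dist (f x) (f y)) {d : ℝ} (hd : 0 ≤ d) :
    μH[d] s ≤ (K : ℝ≥0∞) ^ d * μH[d] (f '' s) := by
  have hg : AntilipschitzWith K (s.domRestrict f) :=
    AntilipschitzWith.of_le_mul_dist fun x y => hf x x.2 y y.2
  have hs := (isometry_subtype_coe (s := s)).hausdorffMeasure_image (Or.inl hd) Set.univ
  rw [Set.image_univ, Subtype.range_coe] at hs
  rw [hs, ← Set.range_domRestrict, ← Set.image_univ]
  exact hg.le_hausdorffMeasure_image hd _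

section Sphere

variable {E : Type*} [NormedAddCommGroup E] [InnerProductSpace ℝ E]

theorem norm_sub_inner_smul_sq {v : E} (hv : ‖v‖ = 1) (x : E) :
    ‖x - ⟪v, x⟫ • v‖ ^ 2 = ‖x‖ ^ 2 - ⟪v, x⟫ ^ 2 := by
  rw [norm_sub_sq_real, norm_smul, real_inner_smul_right, real_inner_comm, hv,
    Real.norm_eq_abs, mul_one, sq_abs]
  ring

theorem norm_sub_le_of_le_inner {v : E} (hv : ‖v‖ = 1) {r c : ℝ} (hc : 0 < c) {x y : E}
    (hx : ‖x‖ = r) (hy : ‖y‖ = r) (hxc : c ≤ ⟪v, x⟫) (hyc : c ≤ ⟪v, y⟫) :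
    ‖x - y‖ ≤ (1 + r / c) * ‖(x - ⟪v, x⟫ • v) - (y - ⟪v, y⟫ • v)‖ := by
  set a := ⟪v, x⟫
  set b := ⟪v, y⟫
  set p := x - a • v
  set q := y - b • v
  have hr : 0 ≤ r := hx ▸ norm_nonneg x
  have hp : ‖p‖ ^ 2 = r ^ 2 - a ^ 2 := by rw [norm_sub_inner_smul_sq hv, hx]
  have hq : ‖q‖ ^ 2 = r ^ 2 - b ^ 2 := by rw [norm_sub_inner_smul_sq hv, hy]
  have hpr : ‖p‖ ≤ r := by nlinarith [norm_nonneg p]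
  have hqr : ‖q‖ ≤ r := by nlinarith [norm_nonneg q]
  -- `(a - b) (a + b) = ‖q‖² - ‖p‖²`, and `a + b ≥ 2c`
  have hab : |a - b| ≤ r / c * ‖p - q‖ := by
    have hpq : |‖p‖ - ‖q‖| ≤ ‖p - q‖ := abs_norm_sub_norm_le p q
    have key : |a - b| * (a + b) = |‖p‖ - ‖q‖| * (‖p‖ + ‖q‖) := by
      rw [← abs_of_nonneg (by linarith : 0 ≤ a + b), ← abs_mul,
        ← abs_of_nonneg (by positivity : 0 ≤ ‖p‖ + ‖q‖), ← abs_mul, ← abs_neg]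
      congr 1
      nlinarith
    rw [div_mul_eq_mul_div, le_div_iff₀ hc]
    nlinarith [mul_le_mul_of_nonneg_left (by linarith : 2 * c ≤ a + b) (abs_nonneg (a - b)),
      mul_le_mul hpq (by linarith : ‖p‖ + ‖q‖ ≤ 2 * r) (by positivity) (norm_nonneg (p - q))]
  calc ‖x - y‖ = ‖(p - q) + (a - b) • v‖ := by congr 1; simp only [p, q, sub_smul]; abel
    _ ≤ ‖p - q‖ + |a - b| := by
      grw [norm_add_le, norm_smul, hv, Real.norm_eq_abs, mul_one]
    _ ≤ (1 + r / c) * ‖p - q‖ := by linarith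

theorem coe_orthogonalProjectionOnto_orthogonal_span_unit {v : E} (hv : ‖v‖ = 1) (x : E) :
    ((ℝ ∙ v)ᗮ.orthogonalProjectionOnto x : E) = x - ⟪v, x⟫ • v := by
  rw [Submodule.coe_orthogonalProjectionOnto_apply, eq_sub_iff_add_eq, add_comm,
    ← Submodule.starProjection_unit_singleton ℝ hv]
  exact Submodule.starProjection_add_starProjection_orthogonal x

theorem finrank_orthogonal_span_unit [FiniteDimensional ℝ E] {v : E} (hv : ‖v‖ = 1) :
    ((finrank ℝ (ℝ ∙ v)ᗮ : ℕ) : ℝ) = (finrank ℝ E : ℝ) - 1 := by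
  have hv0 : v ≠ 0 := by rintro rfl; simp at hv
  have h := (ℝ ∙ v).finrank_add_finrank_orthogonal
  rw [finrank_span_singleton hv0] at h
  rw [← h]; push_cast; ring

def sphereCap (v : E) (r c : ℝ) : Set E := {x ∈ sphere (0 : E) r | c ≤ ⟪v, x⟫}

theorem hausdorffMeasure_sphereCap_lt_top [FiniteDimensional ℝ E] [MeasurableSpace E]
    [BorelSpace E] {v : E} (hv : ‖v‖ = 1) (r : ℝ) {c : ℝ} (hc : 0 < c) :
    μH[(finrank ℝ E : ℝ) - 1] (sphereCap v r c) < ∞ := by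
  set K := (ℝ ∙ v)ᗮ
  set P := K.orthogonalProjectionOnto
  rw [← finrank_orthogonal_span_unit hv]
  have hcap : ∀ x ∈ sphereCap v r c, ∀ y ∈ sphereCap v r c,
      dist x y ≤ (1 + r / c).toNNReal * dist (P x) (P y) := by
    rintro x ⟨hx, hxc⟩ y ⟨hy, hyc⟩
    rw [mem_sphere_zero_iff_norm] at hx hy
    have hr : 0 ≤ r := hx ▸ norm_nonneg x
    have key := norm_sub_le_of_le_inner hv hc hx hy hxc hyc
    rw [← coe_orthogonalProjectionOnto_orthogonal_span_unit hv,
      ← coe_orthogonalProjectionOnto_orthogonal_span_unit hv, ← Submodule.coe_sub] at key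
    rwa [Real.coe_toNNReal _ (by positivity), dist_eq_norm, dist_eq_norm]
  have himage : P '' sphereCap v r c ⊆ closedBall 0 r := by
    rintro _ ⟨x, ⟨hx, -⟩, rfl⟩
    rw [mem_closedBall_zero_iff, ← mem_sphere_zero_iff_norm.1 hx]
    exact K.norm_orthogonalProjectionOnto_apply_le x
  calc _ ≤ ((1 + r / c).toNNReal : ℝ≥0∞) ^ ((finrank ℝ K : ℕ) : ℝ) * μH[(finrank ℝ K : ℕ)]
          (P '' sphereCap v r c) :=
        hausdorffMeasure_le_mul_image_of_antilipschitzOn hcap (Nat.cast_nonneg _)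
    _ ≤ ((1 + r / c).toNNReal : ℝ≥0∞) ^ ((finrank ℝ K : ℕ) : ℝ) *
          μH[(finrank ℝ K : ℕ)] (closedBall (0 : K) r) := by gcongr
    _ < ∞ := ENNReal.mul_lt_top (by simp) (isCompact_closedBall _ _).measure_lt_top

theorem sphere_subset_iUnion_sphereCap {ι : Type*} [Fintype ι] [Nonempty ι]
    (b : OrthonormalBasis ι ℝ E) (r : ℝ) :
    sphere (0 : E) r ⊆
      ⋃ i, (sphereCap (b i) r (r / Fintype.card ι) ∪ sphereCap (-b i) r (r / Fintype.card ι)) := by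
  intro x hx
  have hn : (0 : ℝ) < Fintype.card ι := Nat.cast_pos.2 Fintype.card_pos
  -- `x = ∑ ⟪b i, x⟫ b i`, so some coordinate has absolute value at least `‖x‖ / card ι`
  have hsum : ∑ _i : ι, r / Fintype.card ι ≤ ∑ i, |⟪b i, x⟫| := by
    calc ∑ _i : ι, r / Fintype.card ι = ‖x‖ := by
          rw [Finset.sum_const, Finset.card_univ, nsmul_eq_mul,
            mem_sphere_zero_iff_norm.1 hx, mul_div_cancel₀ _ hn.ne']
      _ = ‖∑ i, ⟪b i, x⟫ • b i‖ := by rw [b.sum_repr']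
      _ ≤ ∑ i, |⟪b i, x⟫| := by
          grw [norm_sum_le]
          simp [norm_smul, b.orthonormal.1]
  obtain ⟨i, -, hi⟩ := Finset.exists_le_of_sum_le Finset.univ_nonempty hsum
  refine Set.mem_iUnion.2 ⟨i, ?_⟩
  refine (le_abs.1 hi).imp (⟨hx, ·⟩) fun h => ⟨hx, ?_⟩
  rwa [inner_neg_left]

theorem hausdorffMeasure_sphere_lt_top [FiniteDimensional ℝ E] [Nontrivial E] [MeasurableSpace E]
    [BorelSpace E] (r : ℝ) : μH[(finrank ℝ E : ℝ) - 1] (sphere (0 : E) r) < ∞ := by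
  rcases le_or_gt r 0 with hr | hr
  · refine (Measure.hausdorffMeasure_le_one_of_subsingleton (subsingleton_sphere 0 hr) ?_).trans_lt
      ENNReal.one_lt_top
    have : (1 : ℝ) ≤ finrank ℝ E := Nat.one_le_cast.2 finrank_pos
    linarith
  set b := stdOrthonormalBasis ℝ E
  have : Nonempty (Fin (finrank ℝ E)) := Fin.pos_iff_nonempty.1 finrank_pos
  have hc : 0 < r / Fintype.card (Fin (finrank ℝ E)) :=
    div_pos hr (Nat.cast_pos.2 Fintype.card_pos)
  refine (measure_mono (sphere_subset_iUnion_sphereCap b r)).trans_lt <|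
    (measure_iUnion_fintype_le _ _).trans_lt <| ENNReal.sum_lt_top.2 fun i _ => ?_
  exact (measure_union_le _ _).trans_lt <| ENNReal.add_lt_top.2
    ⟨hausdorffMeasure_sphereCap_lt_top (b.orthonormal.1 i) r hc,
      hausdorffMeasure_sphereCap_lt_top (by simp [b.orthonormal.1 i]) r hc⟩

theorem integrableOn_sphere_of_continuous [FiniteDimensional ℝ E] [Nontrivial E]
    [MeasurableSpace E] [BorelSpace E] {f : E → ℝ} (hf : Continuous f) (r : ℝ) :
    IntegrableOn f (sphere (0 : E) r) μH[(finrank ℝ E : ℝ) - 1] := by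
  obtain ⟨C, hC⟩ := (isCompact_sphere (0 : E) r).exists_bound_of_continuousOn hf.continuousOn
  exact Measure.integrableOn_of_bounded (hausdorffMeasure_sphere_lt_top r).ne
    hf.aestronglyMeasurable (ae_restrict_of_forall_mem isClosed_sphere.measurableSet hC)

theorem setIntegral_sphere_comp_linearIsometryEquiv [MeasurableSpace E] [BorelSpace E]
    (e : E ≃ₗᵢ[ℝ] E) (f : E → ℝ) (r d : ℝ) :
    ∫ x in sphere (0 : E) r, f (e x) ∂μH[d] = ∫ x in sphere (0 : E) r, f x ∂μH[d] := by
  have hpre : e ⁻¹' sphere 0 r = sphere 0 r := by simp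
  nth_rw 1 [← hpre]
  exact (e.toIsometryEquiv.measurePreserving_hausdorffMeasure d).setIntegral_preimage_emb
    e.toHomeomorph.measurableEmbedding f _

end Sphere

noncomputable def sphereSecondMoment (ι : Type*) [Fintype ι] (r : ℝ) : ℝ :=
  r ^ 2 * (μH[(Fintype.card ι : ℝ) - 1] (sphere (0 : EuclideanSpace ℝ ι) r)).toReal /
    Fintype.card ι

section Moments

variable {ι : Type*} [Fintype ι]

theorem integrableOn_sphere_coord_mul_coord [Nonempty ι] (r : ℝ) (i j : ι) :
    IntegrableOn (fun x : EuclideanSpace ℝ ι => x i * x j) (sphere 0 r)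
      μH[(Fintype.card ι : ℝ) - 1] := by
  simpa using integrableOn_sphere_of_continuous (E := EuclideanSpace ℝ ι) (by fun_prop) r

theorem setIntegral_sphere_coord_mul_coord_of_ne [DecidableEq ι] (r : ℝ) {i j : ι}
    (hij : i ≠ j) :
    ∫ x in sphere (0 : EuclideanSpace ℝ ι) r, x i * x j ∂μH[(Fintype.card ι : ℝ) - 1] = 0 := by
  let e : EuclideanSpace ℝ ι ≃ₗᵢ[ℝ] EuclideanSpace ℝ ι := LinearIsometryEquiv.piLpCongrRight 2
    fun k => if k = i then LinearIsometryEquiv.neg ℝ else LinearIsometryEquiv.refl ℝ ℝ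
  have h := setIntegral_sphere_comp_linearIsometryEquiv e (fun x => x i * x j) r
    ((Fintype.card ι : ℝ) - 1)
  simp [e, LinearIsometryEquiv.piLpCongrRight_apply, hij.symm, integral_neg] at h
  linarith

theorem setIntegral_sphere_coord_mul_self [Nonempty ι] (r : ℝ) (i : ι) :
    ∫ x in sphere (0 : EuclideanSpace ℝ ι) r, x i * x i ∂μH[(Fintype.card ι : ℝ) - 1] =
      sphereSecondMoment ι r := by
  have hswap (k : ι) :
      ∫ x in sphere (0 : EuclideanSpace ℝ ι) r, x k * x k ∂μH[(Fintype.card ι : ℝ) - 1] =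
        ∫ x in sphere (0 : EuclideanSpace ℝ ι) r, x i * x i ∂μH[(Fintype.card ι : ℝ) - 1] := by
    classical
    rw [← setIntegral_sphere_comp_linearIsometryEquiv
      (LinearIsometryEquiv.piLpCongrLeft 2 ℝ ℝ (Equiv.swap i k))]
    simp
  have hsum : ∑ k, ∫ x in sphere (0 : EuclideanSpace ℝ ι) r, x k * x k
      ∂μH[(Fintype.card ι : ℝ) - 1] =
        r ^ 2 * (μH[(Fintype.card ι : ℝ) - 1] (sphere (0 : EuclideanSpace ℝ ι) r)).toReal := by
    rw [← integral_finsetSum _ fun k _ => integrableOn_sphere_coord_mul_coord r k k,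
      setIntegral_congr_fun isClosed_sphere.measurableSet (g := fun _ => r ^ 2),
      setIntegral_const, smul_eq_mul, mul_comm, measureReal_def]
    intro x hx
    rw [← mem_sphere_zero_iff_norm.1 hx, EuclideanSpace.norm_sq_eq]
    simp [sq]
  rw [Finset.sum_congr rfl fun k _ => hswap k, Finset.sum_const, Finset.card_univ,
    nsmul_eq_mul] at hsum
  rw [sphereSecondMoment, ← hsum]
  field_simp

theorem setIntegral_sphere_coord_mul_coord [DecidableEq ι] [Nonempty ι] (r : ℝ) (i j : ι) :
    ∫ x in sphere (0 : EuclideanSpace ℝ ι) r, x i * x j ∂μH[(Fintype.card ι : ℝ) - 1] =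
      if i = j then sphereSecondMoment ι r else 0 := by
  split_ifs with hij
  · subst hij; exact setIntegral_sphere_coord_mul_self r i
  · exact setIntegral_sphere_coord_mul_coord_of_ne r hij

end Moments

theorem integral_sum_sum_const_mul {α κ κ' : Type*} [MeasurableSpace α] {μ : Measure α}
    [Fintype κ] [Fintype κ'] (A : κ → κ' → ℝ) {g : κ → κ' → α → ℝ}
    (hg : ∀ p q, Integrable (g p q) μ) :
    ∫ x, ∑ p, ∑ q, A p q * g p q x ∂μ = ∑ p, ∑ q, A p q * ∫ x, g p q x ∂μ := by
  rw [integral_finsetSum _ fun p _ => integrable_finsetSum _ fun q _ => (hg p q).const_mul _]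
  refine Finset.sum_congr rfl fun p _ => ?_
  rw [integral_finsetSum _ fun q _ => (hg p q).const_mul _]
  simp only [integral_const_mul]

theorem setIntegral_sphere_sum_sum_mul_coord_mul_coord {ι κ κ' : Type*} [Fintype ι]
    [DecidableEq ι] [Nonempty ι] [Fintype κ] [Fintype κ'] (r : ℝ) (A : κ → κ' → ℝ) (u : κ → ι)
    (w : κ' → ι) :
    ∫ x in sphere (0 : EuclideanSpace ℝ ι) r, ∑ p, ∑ q, A p q * (x (u p) * x (w q))
        ∂μH[(Fintype.card ι : ℝ) - 1] =
      ∑ p, ∑ q, A p q * if u p = w q then sphereSecondMoment ι r else 0 := by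
  rw [integral_sum_sum_const_mul A fun p q => integrableOn_sphere_coord_mul_coord r (u p) (w q)]
  simp only [setIntegral_sphere_coord_mul_coord]

theorem setIntegral_sphere_setIntegral_sphere_sum_sum {ι ι' κ κ' : Type*} [Fintype ι]
    [DecidableEq ι] [Nonempty ι] [Fintype ι'] [DecidableEq ι'] [Nonempty ι'] [Fintype κ]
    [Fintype κ'] (r s : ℝ) (A : κ → κ' → ℝ) (u : κ → ι) (u' : κ' → ι) (w : κ → ι')
    (w' : κ' → ι') :
    ∫ x in sphere (0 : EuclideanSpace ℝ ι) r, ∫ y in sphere (0 : EuclideanSpace ℝ ι') s,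
        ∑ p, ∑ q, A p q * (x (u p) * x (u' q)) * (y (w p) * y (w' q))
        ∂μH[(Fintype.card ι' : ℝ) - 1] ∂μH[(Fintype.card ι : ℝ) - 1] =
      ∑ p, ∑ q, if u p = u' q ∧ w p = w' q then
        sphereSecondMoment ι r * sphereSecondMoment ι' s * A p q else 0 := by
  simp only [setIntegral_sphere_sum_sum_mul_coord_mul_coord,
    mul_right_comm _ (_ * _) (ite _ _ _), setIntegral_sphere_sum_sum_mul_coord_mul_coord]
  refine Finset.sum_congr rfl fun p _ => Finset.sum_congr rfl fun q _ => ?_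
  rw [ite_and]
  split_ifs <;> ring

theorem matOf_kronecker_transpose_mul_mul_apply {nX mX nY mY : ℕ}
    (H : Matrix (Fin nX × Fin nY) (Fin nX × Fin nY) ℝ) (x : EuclideanSpace ℝ (Fin nX × Fin mX))
    (y : EuclideanSpace ℝ (Fin nY × Fin mY)) (a b : Fin mX × Fin mY) :
    ((matOf x ⊗ₖ matOf y)ᵀ * H * (matOf x ⊗ₖ matOf y)) a b =
      ∑ p, ∑ q, H p q * (x (p.1, a.1) * x (q.1, b.1)) * (y (p.2, a.2) * y (q.2, b.2)) := by
  simp only [Matrix.mul_apply, Matrix.transpose_apply, Matrix.kroneckerMap_apply, matOf,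
    Matrix.of_apply, Finset.sum_mul]
  rw [Finset.sum_comm]
  exact Finset.sum_congr rfl fun p _ => Finset.sum_congr rfl fun q _ => by ring

theorem stmt2_general (nX mX nY mY : ℕ) (hnX : 0 < nX) (hmX : 0 < mX) (hnY : 0 < nY) (hmY : 0 < mY)
    (ω₁ ω₂ : ℝ)
    (H : Matrix (Fin nX × Fin nY) (Fin nX × Fin nY) ℝ) :
    ∀ a b : Fin mX × Fin mY,
      (∫ x in Metric.sphere (0 : EuclideanSpace ℝ (Fin nX × Fin mX)) ω₁,
        ∫ y in Metric.sphere (0 : EuclideanSpace ℝ (Fin nY × Fin mY)) ω₂,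
          ((matOf x ⊗ₖ matOf y)ᵀ * H * (matOf x ⊗ₖ matOf y)) a b
            ∂(μH[(nY * mY : ℝ) - 1]) ∂(μH[(nX * mX : ℝ) - 1])) =
        ω₁ ^ 2 * ω₂ ^ 2 *
            (μH[(nX * mX : ℝ) - 1]
              (Metric.sphere (0 : EuclideanSpace ℝ (Fin nX × Fin mX)) ω₁)).toReal *
            (μH[(nY * mY : ℝ) - 1]
              (Metric.sphere (0 : EuclideanSpace ℝ (Fin nY × Fin mY)) ω₂)).toReal /
            (nX * mX * nY * mY) * H.trace *
          (1 : Matrix (Fin mX × Fin mY) (Fin mX × Fin mY) ℝ) a b := by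
  intro a b
  have : Nonempty (Fin nX × Fin mX) := ⟨(⟨0, hnX⟩, ⟨0, hmX⟩)⟩
  have : Nonempty (Fin nY × Fin mY) := ⟨(⟨0, hnY⟩, ⟨0, hmY⟩)⟩
  have hX : (nX * mX : ℝ) - 1 = (Fintype.card (Fin nX × Fin mX) : ℝ) - 1 := by simp
  have hY : (nY * mY : ℝ) - 1 = (Fintype.card (Fin nY × Fin mY) : ℝ) - 1 := by simp
  rw [hX, hY]
  simp only [matOf_kronecker_transpose_mul_mul_apply]
  rw [setIntegral_sphere_setIntegral_sphere_sum_sum ω₁ ω₂ H (fun p => (p.1, a.1))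
    (fun q => (q.1, b.1)) (fun p => (p.2, a.2)) (fun q => (q.2, b.2))]
  have hcond (p q : Fin nX × Fin nY) :
      ((p.1, a.1) = (q.1, b.1) ∧ (p.2, a.2) = (q.2, b.2)) ↔ (a = b ∧ p = q) := by
    simp only [Prod.ext_iff]; tauto
  simp only [hcond, ite_and, Matrix.one_apply]
  split_ifs
  · simp only [Finset.sum_ite_eq, Finset.mem_univ, if_true, Matrix.trace, Matrix.diag,
      Finset.mul_sum, mul_one]
    refine Finset.sum_congr rfl fun p _ => ?_
    simp only [sphereSecondMoment, Fintype.card_prod, Fintype.card_fin, Nat.cast_mul]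
    ring
  · simp

/-- `∬_{V₁×V₂} (X ⊗ Y)ᵀ H (X ⊗ Y) dX dY
  = (ω₁² ω₂² |V₁| |V₂| /(n_X m_X n_Y m_Y)) tr(H) I_{m_X m_Y}`. -/
theorem stmt2 (nX mX nY mY : ℕ) (hnX : 0 < nX) (hmX : 0 < mX) (hnY : 0 < nY) (hmY : 0 < mY)
    (ω₁ ω₂ : ℝ) (hω₁ : 0 < ω₁) (hω₂ : 0 < ω₂)
    (H : Matrix (Fin nX × Fin nY) (Fin nX × Fin nY) ℝ) :
    ∀ a b : Fin mX × Fin mY,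
      (∫ x in Metric.sphere (0 : EuclideanSpace ℝ (Fin nX × Fin mX)) ω₁,
        ∫ y in Metric.sphere (0 : EuclideanSpace ℝ (Fin nY × Fin mY)) ω₂,
          ((matOf x ⊗ₖ matOf y)ᵀ * H * (matOf x ⊗ₖ matOf y)) a b
            ∂(μH[(nY * mY : ℝ) - 1]) ∂(μH[(nX * mX : ℝ) - 1])) =
        ω₁ ^ 2 * ω₂ ^ 2 *
            (μH[(nX * mX : ℝ) - 1]
              (Metric.sphere (0 : EuclideanSpace ℝ (Fin nX × Fin mX)) ω₁)).toReal *
            (μH[(nY * mY : ℝ) - 1]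
              (Metric.sphere (0 : EuclideanSpace ℝ (Fin nY × Fin mY)) ω₂)).toReal /
            (nX * mX * nY * mY) * H.trace *
          (1 : Matrix (Fin mX × Fin mY) (Fin mX × Fin mY) ℝ) a b :=
  stmt2_general nX mX nY mY hnX hmX hnY hmY ω₁ ω₂ H
end

section
/- Let A be a tensor in ℝ^{n_L × n_N × n_R} with two standard representations (Q_L, Σ_L, N, Σ_R, Q_R) and (Q̃_L, Σ_L, Ñ, Σ_R, Q̃_R) (both satisfying the SVD conditions of the standard representation). Then there exist orthogonal matrices w₁ and w₂, each commuting with Σ_L and Σ_R respectively (in particular, block diagonal with respect to groups of equal singular values), such that Q̃_L = Q_L w₁, Q̃_R = w₂ᵀ Q_R, and Ñ(j) = w₁ᵀ N(j) w₂ for all j. -/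
open Matrix

/-!
For `U Σ M = U' Σ M'` with `Uᵀ U = 1 = U'ᵀ U'` and `M Mᵀ = 1 = M' M'ᵀ`, the Gram matrix
`U Σ² Uᵀ = U' Σ² U'ᵀ` shows that `w = Uᵀ U'` commutes with `Σ²`, hence with `Σ` because `Σ > 0`,
and that `U' = U w`; cancelling `U` and `Σ` then gives `M' = wᵀ M`. The matricization `A^{(1)}`
yields `w₁`, the matricization `A^{(1,2)}` yields `w₂`, and comparing the slices
`Q_L Σ_L N(j) w₂ = Q_L w₁ Σ_L Ñ(j)` of the left factor of `A^{(1,2)}` gives `Ñ(j) = w₁ᵀ N(j) w₂`.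
-/

def lunf {n k1 k2 : ℕ} (H : Fin n → Matrix (Fin k1) (Fin k2) ℝ) :
    Matrix (Fin k1 × Fin n) (Fin k2) ℝ := Matrix.of fun p q => H p.2 p.1 q

def runf {n k1 k2 : ℕ} (H : Fin n → Matrix (Fin k1) (Fin k2) ℝ) :
    Matrix (Fin k1) (Fin n × Fin k2) ℝ := Matrix.of fun l p => H p.1 l p.2

/-- `(Q_L, Σ_L, N, Σ_R, Q_R)` is a standard representation of the tensor `A`:
`A(i,j,k) = (Q_L Σ_L N(j) Σ_R Q_R)_{i,k}`, `Q_L Σ_L (runf (N Σ_R Q_R))` is a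
truncated SVD of `A^{(1)}` and `(lunf (Q_L Σ_L N)) Σ_R Q_R` one of `A^{(1,2)}`. -/
def IsStdRep {nL nN nR rL rR : ℕ} (A : Fin nL → Fin nN → Fin nR → ℝ)
    (QL : Matrix (Fin nL) (Fin rL) ℝ) (sL : Fin rL → ℝ)
    (N : Fin nN → Matrix (Fin rL) (Fin rR) ℝ) (sR : Fin rR → ℝ)
    (QR : Matrix (Fin rR) (Fin nR) ℝ) : Prop :=
  (∀ i j k, A i j k = (QL * Matrix.diagonal sL * N j * Matrix.diagonal sR * QR) i k) ∧
  QLᵀ * QL = 1 ∧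
  (runf fun j => N j * Matrix.diagonal sR * QR) *
    (runf fun j => N j * Matrix.diagonal sR * QR)ᵀ = 1 ∧
  (lunf fun j => QL * Matrix.diagonal sL * N j)ᵀ *
    (lunf fun j => QL * Matrix.diagonal sL * N j) = 1 ∧
  QR * QRᵀ = 1

namespace Matrix

variable {m n r : Type*} [Fintype r] [DecidableEq r]

theorem diagonal_mul_diagonal_inv {K : Type*} [DivisionRing K] {σ : r → K}
    (hσ : ∀ a, σ a ≠ 0) : diagonal σ * diagonal σ⁻¹ = 1 := by
  rw [diagonal_mul_diagonal, ← diagonal_one]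
  exact congrArg diagonal (funext fun a => mul_inv_cancel₀ (hσ a))

theorem diagonal_inv_mul_diagonal {K : Type*} [DivisionRing K] {σ : r → K}
    (hσ : ∀ a, σ a ≠ 0) : diagonal σ⁻¹ * diagonal σ = 1 := by
  rw [diagonal_mul_diagonal, ← diagonal_one]
  exact congrArg diagonal (funext fun a => inv_mul_cancel₀ (hσ a))

theorem mul_diagonal_mul_mul_transpose_self {R : Type*} [CommRing R] [Fintype n]
    (X : Matrix m r R) (σ : r → R) {Y : Matrix r n R} (hY : Y * Yᵀ = 1) :
    X * diagonal σ * Y * (X * diagonal σ * Y)ᵀ = X * (diagonal σ * diagonal σ) * Xᵀ := by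
  simp only [transpose_mul, diagonal_transpose, Matrix.mul_assoc]
  rw [← Matrix.mul_assoc Y, hY, Matrix.one_mul]

theorem mul_diagonal_comm_of_mul_diagonal_sq_comm {σ : r → ℝ} (hσ : ∀ a, 0 ≤ σ a)
    {w : Matrix r r ℝ} (h : w * (diagonal σ * diagonal σ) = diagonal σ * diagonal σ * w) :
    w * diagonal σ = diagonal σ * w := by
  ext a b
  have hab := congrFun₂ h a b
  simp only [diagonal_mul_diagonal, mul_diagonal, diagonal_mul] at hab ⊢
  rcases eq_or_ne (w a b) 0 with hw | hw
  · simp [hw]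
  · rw [(mul_self_inj (hσ b) (hσ a)).mp (mul_left_cancel₀ hw (hab.trans (mul_comm _ _))),
      mul_comm]

theorem exists_orthogonal_of_svd_eq [Fintype m] [Fintype n] {σ : r → ℝ} (hσ : ∀ a, 0 < σ a)
    {U U' : Matrix m r ℝ} {M M' : Matrix r n ℝ} (hU : Uᵀ * U = 1) (hU' : U'ᵀ * U' = 1)
    (hM : M * Mᵀ = 1) (hM' : M' * M'ᵀ = 1) (h : U * diagonal σ * M = U' * diagonal σ * M') :
    ∃ w : Matrix r r ℝ, wᵀ * w = 1 ∧ w * diagonal σ = diagonal σ * w ∧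
      U' = U * w ∧ M' = wᵀ * M := by
  set D := diagonal σ
  have hσ₀ : ∀ a, σ a ≠ 0 := fun a => (hσ a).ne'
  have hD : D * diagonal σ⁻¹ = 1 := diagonal_mul_diagonal_inv hσ₀
  have hD' : diagonal σ⁻¹ * D = 1 := diagonal_inv_mul_diagonal hσ₀
  have hgram : U * (D * D) * Uᵀ = U' * (D * D) * U'ᵀ := by
    rw [← mul_diagonal_mul_mul_transpose_self U σ hM,
      ← mul_diagonal_mul_mul_transpose_self U' σ hM', h]
  set w := Uᵀ * U'
  have hU'D : U' * (D * D) = U * (D * D) * w := by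
    calc U' * (D * D) = U' * (D * D) * U'ᵀ * U' := by
          rw [Matrix.mul_assoc _ U'ᵀ, hU', Matrix.mul_one]
      _ = U * (D * D) * w := by rw [← hgram]; simp only [w, Matrix.mul_assoc]
  have hwD2 : w * (D * D) = D * D * w := by
    calc w * (D * D) = Uᵀ * U * (D * D) * w := by
          rw [Matrix.mul_assoc Uᵀ, hU'D]; simp only [Matrix.mul_assoc]
      _ = D * D * w := by rw [hU, one_mul]
  have hwD : w * D = D * w := mul_diagonal_comm_of_mul_diagonal_sq_comm (fun a => (hσ a).le) hwD2
  have hU'w : U' = U * w := by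
    have hcancel := mul_left_injective_of_inv (l := m) D _ hD
    refine hcancel (hcancel ?_)
    simpa only [Matrix.mul_assoc, hwD2] using hU'D
  have hw : wᵀ * w = 1 := by
    calc wᵀ * w = (U * w)ᵀ * (U * w) := by
          rw [transpose_mul U w, Matrix.mul_assoc, ← Matrix.mul_assoc Uᵀ, hU, Matrix.one_mul]
      _ = 1 := by rw [← hU'w, hU']
  refine ⟨w, hw, hwD, hU'w, ?_⟩
  have hMw : M = w * M' := by
    refine mul_right_injective_of_inv _ _ hD' (mul_right_injective_of_inv _ _ hU ?_)
    dsimp only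
    rw [← Matrix.mul_assoc, ← Matrix.mul_assoc, h, hU'w, Matrix.mul_assoc U w, hwD]
    simp only [Matrix.mul_assoc]
  rw [hMw, ← Matrix.mul_assoc, hw, Matrix.one_mul]

end Matrix

theorem mul_runf {n k₀ k₁ k₂ : ℕ} (X : Matrix (Fin k₀) (Fin k₁) ℝ)
    (H : Fin n → Matrix (Fin k₁) (Fin k₂) ℝ) : X * runf H = runf fun j => X * H j := by
  ext i p
  simp [runf, Matrix.mul_apply]

theorem lunf_mul {n k₁ k₂ k₃ : ℕ} (H : Fin n → Matrix (Fin k₁) (Fin k₂) ℝ)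
    (Y : Matrix (Fin k₂) (Fin k₃) ℝ) : lunf H * Y = lunf fun j => H j * Y := by
  ext p k
  simp [lunf, Matrix.mul_apply]

theorem lunf_injective {n k₁ k₂ : ℕ} :
    Function.Injective (lunf : (Fin n → Matrix (Fin k₁) (Fin k₂) ℝ) → _) :=
  fun _ _ h => funext fun j => Matrix.ext fun i k => congrFun₂ h (i, j) k

namespace IsStdRep

variable {nL nN nR rL rR : ℕ} {A : Fin nL → Fin nN → Fin nR → ℝ}
  {QL : Matrix (Fin nL) (Fin rL) ℝ} {sL : Fin rL → ℝ} {N : Fin nN → Matrix (Fin rL) (Fin rR) ℝ}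
  {sR : Fin rR → ℝ} {QR : Matrix (Fin rR) (Fin nR) ℝ}

theorem mul_runf_eq (h : IsStdRep A QL sL N sR QR) :
    QL * diagonal sL * (runf fun j => N j * diagonal sR * QR) = of fun i p => A i p.1 p.2 := by
  rw [mul_runf]
  ext i p
  simp only [runf, of_apply, ← Matrix.mul_assoc, h.1]

theorem lunf_mul_eq (h : IsStdRep A QL sL N sR QR) :
    (lunf fun j => QL * diagonal sL * N j) * diagonal sR * QR = of fun p k => A p.1 p.2 k := by
  rw [Matrix.mul_assoc, lunf_mul]
  ext p k
  simp only [lunf, of_apply, ← Matrix.mul_assoc, h.1]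

end IsStdRep

/-- essential uniqueness of the standard representation.  Two
standard representations of the same tensor (with the same positive singular
values `Σ_L, Σ_R`) differ only by orthogonal matrices `w₁, w₂` commuting with
`Σ_L` resp. `Σ_R`. -/
theorem stmt7 (nL nN nR rL rR : ℕ) (A : Fin nL → Fin nN → Fin nR → ℝ)
    (sL : Fin rL → ℝ) (sR : Fin rR → ℝ)
    (hsL : ∀ a, 0 < sL a) (hsR : ∀ b, 0 < sR b)
    (QL : Matrix (Fin nL) (Fin rL) ℝ) (N : Fin nN → Matrix (Fin rL) (Fin rR) ℝ)
    (QR : Matrix (Fin rR) (Fin nR) ℝ)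
    (QL' : Matrix (Fin nL) (Fin rL) ℝ) (N' : Fin nN → Matrix (Fin rL) (Fin rR) ℝ)
    (QR' : Matrix (Fin rR) (Fin nR) ℝ)
    (h : IsStdRep A QL sL N sR QR) (h' : IsStdRep A QL' sL N' sR QR') :
    ∃ (w₁ : Matrix (Fin rL) (Fin rL) ℝ) (w₂ : Matrix (Fin rR) (Fin rR) ℝ),
      w₁ᵀ * w₁ = 1 ∧ w₂ᵀ * w₂ = 1 ∧
      w₁ * Matrix.diagonal sL = Matrix.diagonal sL * w₁ ∧
      w₂ * Matrix.diagonal sR = Matrix.diagonal sR * w₂ ∧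
      QL' = QL * w₁ ∧ QR' = w₂ᵀ * QR ∧ ∀ j, N' j = w₁ᵀ * N j * w₂ := by
  have hA₁ := h.mul_runf_eq.trans h'.mul_runf_eq.symm
  have hA₁₂ := h.lunf_mul_eq.trans h'.lunf_mul_eq.symm
  obtain ⟨-, hQL, hM, hP, hQR⟩ := h
  obtain ⟨-, hQL', hM', hP', hQR'⟩ := h'
  obtain ⟨w₁, hw₁, hw₁D, hQL'w, -⟩ := exists_orthogonal_of_svd_eq hsL hQL hQL' hM hM' hA₁
  obtain ⟨w₂, hw₂, hw₂D, hP'w, hQR'w⟩ := exists_orthogonal_of_svd_eq hsR hP hP' hQR hQR' hA₁₂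
  refine ⟨w₁, w₂, hw₁, hw₂, hw₁D, hw₂D, hQL'w, hQR'w, fun j => ?_⟩
  have hslice : QL * (diagonal sL * (w₁ * N' j)) = QL * (diagonal sL * (N j * w₂)) := by
    rw [lunf_mul] at hP'w
    have := congrFun (lunf_injective hP'w) j
    rw [hQL'w, Matrix.mul_assoc QL w₁, hw₁D] at this
    simpa only [Matrix.mul_assoc] using this
  have hw₁N' : w₁ * N' j = N j * w₂ :=
    mul_right_injective_of_inv _ _ (diagonal_inv_mul_diagonal fun a => (hsL a).ne')
      (mul_right_injective_of_inv _ _ hQL hslice)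
  rw [Matrix.mul_assoc, ← hw₁N', ← Matrix.mul_assoc, hw₁, Matrix.one_mul]
end

section
/- For P equal to the full index set, the minimizer of the variational (averaged) residual function is given entrywise by the filter formula: N⁺ = F ⊙ (Q_Lᵀ B Q_Rᵀ) where F = (I ⊗ I + ζ₁ · I ⊗ Σ_L^{-2} + ζ₂ · Σ_R^{-2} ⊗ I + ζ_{1,2} · Σ_R^{-2} ⊗ Σ_L^{-2})^{-1} is a diagonal (Hadamard) filter. Equivalently, the (a,b) entry of N⁺(j) equals (Q_Lᵀ B(j) Q_Rᵀ)_{a,b} / (1 + ζ₁ (σ_L)_a^{-2} + ζ₂ (σ_R)_b^{-2} + ζ_{1,2} (σ_L)_a^{-2}(σ_R)_b^{-2}). -/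
open Matrix

def frobSq {a b : Type*} [Fintype a] [Fintype b] (M : Matrix a b ℝ) : ℝ :=
  ∑ i, ∑ j, (M i j) ^ 2

lemma frobSq_eq_trace {m n : Type*} [Fintype m] [Fintype n]
    (M : Matrix m n ℝ) : frobSq M = (Mᵀ * M).trace := by
  simp only [frobSq, Matrix.trace, Matrix.mul_apply, Matrix.diag, Matrix.transpose_apply, sq]
  rw [Finset.sum_comm]

lemma inner_eq_trace {m n : Type*} [Fintype m] [Fintype n]
    (M N : Matrix m n ℝ) : (∑ i, ∑ j, M i j * N i j) = (Mᵀ * N).trace := by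
  simp only [Matrix.trace, Matrix.mul_apply, Matrix.diag, Matrix.transpose_apply]
  rw [Finset.sum_comm]

lemma frobSq_orth_left {p q s : Type*} [Fintype p] [Fintype q] [Fintype s] [DecidableEq q]
    (Q : Matrix p q ℝ) (h : Qᵀ * Q = 1) (X : Matrix q s ℝ) :
    frobSq (Q * X) = frobSq X := by
  rw [frobSq_eq_trace, frobSq_eq_trace, Matrix.transpose_mul, Matrix.mul_assoc,
    ← Matrix.mul_assoc Qᵀ Q X, h, Matrix.one_mul]

lemma frobSq_orth_right {p q s : Type*} [Fintype p] [Fintype q] [Fintype s] [DecidableEq q]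
    (Q : Matrix q s ℝ) (h : Q * Qᵀ = 1) (X : Matrix p q ℝ) :
    frobSq (X * Q) = frobSq X := by
  rw [frobSq_eq_trace, frobSq_eq_trace, Matrix.transpose_mul,
    Matrix.trace_mul_comm, ← Matrix.mul_assoc, Matrix.mul_assoc _ Q Qᵀ, h, Matrix.mul_one,
    Matrix.trace_mul_comm]

lemma frobSq_sub {m n : Type*} [Fintype m] [Fintype n] (M N : Matrix m n ℝ) :
    frobSq (M - N) = frobSq M - 2 * (∑ i, ∑ j, M i j * N i j) + frobSq N := by
  simp only [frobSq, Matrix.sub_apply, sub_sq, Finset.sum_add_distrib,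
    Finset.sum_sub_distrib, Finset.mul_sum]
  ring

lemma cross_term {nL nR rL rR : Type*} [Fintype nL] [Fintype nR] [Fintype rL] [Fintype rR]
    (QL : Matrix nL rL ℝ) (QR : Matrix rR nR ℝ) (W : Matrix rL rR ℝ) (B : Matrix nL nR ℝ) :
    (∑ i, ∑ l, (QL * W * QR) i l * B i l) = ∑ a, ∑ b, W a b * (QLᵀ * B * QRᵀ) a b := by
  rw [inner_eq_trace, inner_eq_trace]
  rw [Matrix.transpose_mul, Matrix.transpose_mul, Matrix.mul_assoc, Matrix.mul_assoc,
    Matrix.trace_mul_comm]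
  congr 1
  rw [Matrix.mul_assoc, Matrix.mul_assoc]

lemma quad_min (c g x : ℝ) (hc : 0 < c) :
    c * (g/c)^2 - 2 * g * (g/c) ≤ c * x^2 - 2 * g * x := by
  have key : c*x^2 - 2*g*x - (c*(g/c)^2 - 2*g*(g/c)) = (c*x - g)^2 / c := by
    field_simp
    ring
  have h2 : 0 ≤ (c*x - g)^2 / c := div_nonneg (sq_nonneg _) hc.le
  linarith

/-- in the fully sampled case the minimizer of the regularized
micro-step functional is given by the Hadamard filter formula:
`N⁺(j)_{a,b} = (Q_Lᵀ B(j) Q_Rᵀ)_{a,b} /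
  (1 + ζ₁ σ_{L,a}⁻² + ζ₂ σ_{R,b}⁻² + ζ₁₂ σ_{L,a}⁻² σ_{R,b}⁻²)`. -/
theorem stmt17 (nL nN nR rL rR : ℕ)
    (QL : Matrix (Fin nL) (Fin rL) ℝ) (hQL : QLᵀ * QL = 1)
    (QR : Matrix (Fin rR) (Fin nR) ℝ) (hQR : QR * QRᵀ = 1)
    (sL : Fin rL → ℝ) (hsL : ∀ a, 0 < sL a)
    (sR : Fin rR → ℝ) (hsR : ∀ b, 0 < sR b)
    (ζ₁ ζ₂ ζ₁₂ : ℝ) (hζ₁ : 0 ≤ ζ₁) (hζ₂ : 0 ≤ ζ₂) (hζ₁₂ : 0 ≤ ζ₁₂)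
    (B : Fin nN → Matrix (Fin nL) (Fin nR) ℝ) :
    ∀ j : Fin nN,
      let F : Matrix (Fin rL) (Fin rR) ℝ → ℝ := fun W =>
        frobSq (QL * W * QR - B j) +
          ζ₁ * frobSq (Matrix.diagonal (fun a => (sL a)⁻¹) * W * QR) +
          ζ₂ * frobSq (QL * W * Matrix.diagonal (fun b => (sR b)⁻¹)) +
          ζ₁₂ * frobSq (Matrix.diagonal (fun a => (sL a)⁻¹) * W *
            Matrix.diagonal (fun b => (sR b)⁻¹))
      let Nplus : Matrix (Fin rL) (Fin rR) ℝ := Matrix.of fun a b =>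
        (QLᵀ * B j * QRᵀ) a b /
          (1 + ζ₁ / (sL a) ^ 2 + ζ₂ / (sR b) ^ 2 + ζ₁₂ / ((sL a) ^ 2 * (sR b) ^ 2))
      ∀ W : Matrix (Fin rL) (Fin rR) ℝ, F Nplus ≤ F W := by
  intro j F Nplus W
  set G : Matrix (Fin rL) (Fin rR) ℝ := QLᵀ * B j * QRᵀ with hG
  set c : Fin rL → Fin rR → ℝ := fun a b =>
    1 + ζ₁ / (sL a) ^ 2 + ζ₂ / (sR b) ^ 2 + ζ₁₂ / ((sL a) ^ 2 * (sR b) ^ 2) with hcdef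
  have hc : ∀ a b, 0 < c a b := by
    intro a b
    have h1 := hsL a; have h2 := hsR b
    have := div_nonneg hζ₁ (sq_nonneg (sL a))
    have := div_nonneg hζ₂ (sq_nonneg (sR b))
    have := div_nonneg hζ₁₂ (mul_nonneg (sq_nonneg (sL a)) (sq_nonneg (sR b)))
    simp only [hcdef]; linarith
  have key : ∀ V : Matrix (Fin rL) (Fin rR) ℝ,
      F V = (∑ a, ∑ b, (c a b * (V a b)^2 - 2 * G a b * V a b)) + frobSq (B j) := by
    intro V
    have e1 : frobSq (QL * V * QR - B j)
        = frobSq V - 2 * (∑ a, ∑ b, V a b * G a b) + frobSq (B j) := by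
      rw [frobSq_sub, cross_term]
      rw [Matrix.mul_assoc, frobSq_orth_left QL hQL, frobSq_orth_right QR hQR]
    have e2 : frobSq (Matrix.diagonal (fun a => (sL a)⁻¹) * V * QR)
        = ∑ a, ∑ b, ((sL a)⁻¹ * V a b)^2 := by
      rw [frobSq_orth_right QR hQR]
      simp [frobSq, Matrix.diagonal_mul]
    have e3 : frobSq (QL * V * Matrix.diagonal (fun b => (sR b)⁻¹))
        = ∑ a, ∑ b, (V a b * (sR b)⁻¹)^2 := by
      rw [Matrix.mul_assoc, frobSq_orth_left QL hQL]
      simp [frobSq, Matrix.mul_diagonal]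
    have e4 : frobSq (Matrix.diagonal (fun a => (sL a)⁻¹) * V *
          Matrix.diagonal (fun b => (sR b)⁻¹))
        = ∑ a, ∑ b, ((sL a)⁻¹ * V a b * (sR b)⁻¹)^2 := by
      simp [frobSq, Matrix.mul_diagonal, Matrix.diagonal_mul]
    have merge : ∀ a b, c a b * (V a b)^2 - 2 * G a b * V a b
        = (V a b)^2 + ζ₁ * ((sL a)⁻¹ * V a b)^2 + ζ₂ * (V a b * (sR b)⁻¹)^2
          + ζ₁₂ * ((sL a)⁻¹ * V a b * (sR b)⁻¹)^2 - 2 * (V a b * G a b) := by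
      intro a b
      have hLa := (hsL a).ne'
      have hRb := (hsR b).ne'
      simp only [hcdef]
      field_simp
    show frobSq (QL * V * QR - B j) + _ + _ + _ = _
    rw [e1, e2, e3, e4]
    have hfV : frobSq V = ∑ a, ∑ b, (V a b)^2 := rfl
    rw [hfV,
      Finset.sum_congr rfl fun a _ => Finset.sum_congr rfl fun b _ => merge a b]
    simp only [Finset.sum_add_distrib, Finset.sum_sub_distrib, ← Finset.mul_sum]
    ring
  rw [key Nplus, key W]
  have hterm : ∀ a b, c a b * (Nplus a b)^2 - 2 * G a b * Nplus a b
      ≤ c a b * (W a b)^2 - 2 * G a b * W a b := by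
    intro a b
    have : Nplus a b = G a b / c a b := rfl
    rw [this]
    exact quad_min (c a b) (G a b) (W a b) (hc a b)
  have := Finset.sum_le_sum (s := (Finset.univ : Finset (Fin rL)))
    (fun a _ => Finset.sum_le_sum (s := (Finset.univ : Finset (Fin rR)))
      (fun b _ => hterm a b))
  linarith
end
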